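/- Let m, n ≥ 3 be integers and let Ā be the cyclic transfer matrix for width m. Then the domination polynomial of the m×n torus graph satisfies G_{m̄×n̄}(z) = Tr(Ā^n). -/

import Mathlib

open scoped Classical
open Polynomial

/-- The three possible states of a vertex relative to a vertex subset. -/
inductive VState : Type
  | unc | cov | occ
  deriving DecidableEq

instance : Fintype VState :=
  Fintype.ofList [VState.unc, VState.cov, VState.occ] (by intro x; cases x <;> simp)

/-- `S` is a dominating set of `G`: every vertex is in `S` or adjacent to a vertex of `S`. -/
def IsDominating {V : Type*} (G : SimpleGraph V) (S : Finset V) : Prop :=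
  ∀ v : V, v ∈ S ∨ ∃ u ∈ S, G.Adj u v

/-- The domination polynomial of `G`. -/
noncomputable def domPoly {V : Type*} [Fintype V] (G : SimpleGraph V) : Polynomial ℤ :=
  ∑ S ∈ Finset.univ.filter (fun S : Finset V => IsDominating G S),
    (X : Polynomial ℤ) ^ S.card

/-- The m×n torus graph `C_m □ C_n`. -/
def torusGraph (m n : ℕ) : SimpleGraph (Fin m × Fin n) :=
  (SimpleGraph.cycleGraph m).boxProd (SimpleGraph.cycleGraph n)

/-- A signature of length `m`: a string over {unc, cov, occ} with no adjacent
(unc, occ) or (occ, unc) pair. -/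
def IsSignature {m : ℕ} (σ : Fin m → VState) : Prop :=
  ∀ i : Fin m, ∀ h : (i : ℕ) + 1 < m,
    ¬(σ i = VState.unc ∧ σ ⟨(i : ℕ) + 1, h⟩ = VState.occ) ∧
    ¬(σ i = VState.occ ∧ σ ⟨(i : ℕ) + 1, h⟩ = VState.unc)

/-- A cyclic signature: a signature where the adjacency constraint is also imposed
on the pair (first symbol, last symbol). -/
def IsCycSignature {m : ℕ} (σ : Fin m → VState) : Prop :=
  IsSignature σ ∧ ∀ h : 0 < m,
    ¬(σ ⟨0, h⟩ = VState.unc ∧ σ ⟨m - 1, Nat.sub_lt h Nat.one_pos⟩ = VState.occ) ∧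
    ¬(σ ⟨0, h⟩ = VState.occ ∧ σ ⟨m - 1, Nat.sub_lt h Nat.one_pos⟩ = VState.unc)

/-- The cyclic successor of an index (mod `m`). -/
def cycNext {m : ℕ} (i : Fin m) : Fin m := ⟨((i : ℕ) + 1) % m, Nat.mod_lt _ i.pos⟩

/-- The cyclic predecessor of an index (mod `m`). -/
def cycPrev {m : ℕ} (i : Fin m) : Fin m := ⟨((i : ℕ) + (m - 1)) % m, Nat.mod_lt _ i.pos⟩

/-- `τ` is (cyclically) compatible with `σ`, indices taken mod `m`. -/
def CompatibleCyc {m : ℕ} (τ σ : Fin m → VState) : Prop :=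
  ∀ i : Fin m,
    (σ i = VState.unc → τ i = VState.occ) ∧
    (σ i = VState.occ → τ i = VState.cov ∨ τ i = VState.occ) ∧
    (τ i = VState.cov → σ i = VState.occ ∨
      τ (cycPrev i) = VState.occ ∨ τ (cycNext i) = VState.occ)

/-- The number of occupied symbols of a signature. -/
def occCount {m : ℕ} (σ : Fin m → VState) : ℕ :=
  (Finset.univ.filter fun i => σ i = VState.occ).card

/-- The type of cyclic signatures of length `m`. -/
abbrev CycSignature (m : ℕ) := {σ : Fin m → VState // IsCycSignature σ}

/-- The cyclic transfer matrix for width `m`, over ℤ[z], indexed by cyclic signatures. -/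
noncomputable def cycTransferMatrix (m : ℕ) :
    Matrix (CycSignature m) (CycSignature m) (Polynomial ℤ) :=
  fun τ σ =>
    if CompatibleCyc τ.1 σ.1 then (X : Polynomial ℤ) ^ occCount τ.1 else 0

/-! Read a vertex set `S` of the torus column by column: row `i` of column `j` is occupied if
`(i, j) ∈ S`, covered if it is dominated from inside columns `j` and `j + 1`, and uncovered
otherwise. Each column then carries a cyclic signature, and `S` dominates exactly when every
column is compatible with the next one, the compatibility condition saying that column `j`
occupies the cells that column `j + 1` leaves uncovered. This is a weight-preserving bijection
between dominating sets and closed walks of length `n` in the compatibility digraph, and the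
weighted count of those walks is `Tr (Ā ^ n)`. -/

section CyclicIndex

variable {m : ℕ} [NeZero m]

theorem cycNext_eq_add_one (i : Fin m) : cycNext i = i + 1 := by
  ext
  simp [cycNext, Fin.val_add, Nat.add_mod]

theorem cycPrev_eq_sub_one (i : Fin m) : cycPrev i = i - 1 := by
  rcases Nat.lt_or_ge 1 m with hm | hm
  · ext
    simp [cycPrev, Fin.sub_def, Nat.mod_eq_of_lt hm, Nat.add_comm]
  · obtain rfl : m = 1 := by have := NeZero.pos m; omega
    exact Subsingleton.elim _ _

theorem isCycSignature_iff {σ : Fin m → VState} :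
    IsCycSignature σ ↔
      ∀ i, ¬(σ i = .unc ∧ σ (i + 1) = .occ) ∧ ¬(σ i = .occ ∧ σ (i + 1) = .unc) := by
  have hm := NeZero.pos m
  have add_one_of_lt {i : Fin m} (h : (i : ℕ) + 1 < m) : i + 1 = ⟨i + 1, h⟩ := by
    ext; simp [← cycNext_eq_add_one, cycNext, Nat.mod_eq_of_lt h]
  have last_add_one : (⟨m - 1, by omega⟩ : Fin m) + 1 = ⟨0, hm⟩ := by
    ext; simp [← cycNext_eq_add_one, cycNext, Nat.sub_add_cancel hm]
  constructor
  · rintro ⟨hlin, hwrap⟩ i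
    by_cases h : (i : ℕ) + 1 < m
    · rw [add_one_of_lt h]
      exact hlin i h
    · have hi : i = ⟨m - 1, by omega⟩ := Fin.ext (by simp only; omega)
      rw [hi, last_add_one]
      have := hwrap hm
      tauto
  · intro H
    refine ⟨fun i h => add_one_of_lt h ▸ H i, fun _ => ?_⟩
    have := H ⟨m - 1, by omega⟩
    rw [last_add_one] at this
    tauto

theorem compatibleCyc_iff {τ σ : Fin m → VState} :
    CompatibleCyc τ σ ↔ ∀ i,
      (σ i = .unc → τ i = .occ) ∧ (σ i = .occ → τ i = .cov ∨ τ i = .occ) ∧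
      (τ i = .cov → σ i = .occ ∨ τ (i - 1) = .occ ∨ τ (i + 1) = .occ) := by
  simp only [CompatibleCyc, cycPrev_eq_sub_one, cycNext_eq_add_one]

theorem cycleGraph_adj_iff {u v : Fin m} (hm : 1 < m) :
    (SimpleGraph.cycleGraph m).Adj u v ↔ v = u - 1 ∨ v = u + 1 := by
  obtain ⟨k, rfl⟩ : ∃ k, m = k + 2 := ⟨m - 2, by omega⟩
  exact Set.ext_iff.mp SimpleGraph.cycleGraph_neighborSet v

end CyclicIndex

theorem isDominating_torusGraph_iff {m n : ℕ} [NeZero m] [NeZero n] (hm : 1 < m) (hn : 1 < n)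
    {S : Finset (Fin m × Fin n)} :
    IsDominating (torusGraph m n) S ↔ ∀ i j,
      (i, j) ∈ S ∨ (i + 1, j) ∈ S ∨ (i - 1, j) ∈ S ∨ (i, j + 1) ∈ S ∨ (i, j - 1) ∈ S := by
  simp [IsDominating, torusGraph, SimpleGraph.boxProd_adj, cycleGraph_adj_iff hm,
    cycleGraph_adj_iff hn, eq_sub_iff_add_eq, ← sub_eq_iff_eq_add, or_and_right, and_or_left,
    exists_or, or_assoc]

section ColumnStates

variable {m n : ℕ} [NeZero m] [NeZero n]

def colState (S : Finset (Fin m × Fin n)) (j : Fin n) (i : Fin m) : VState :=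
  if (i, j) ∈ S then .occ
  else if (i - 1, j) ∈ S ∨ (i + 1, j) ∈ S ∨ (i, j + 1) ∈ S then .cov
  else .unc

variable {S : Finset (Fin m × Fin n)} {j : Fin n} {i : Fin m}

theorem colState_eq_occ_iff : colState S j i = .occ ↔ (i, j) ∈ S := by
  unfold colState; grind

theorem colState_eq_cov_iff :
    colState S j i = .cov ↔ (i, j) ∉ S ∧ ((i - 1, j) ∈ S ∨ (i + 1, j) ∈ S ∨ (i, j + 1) ∈ S) := by
  unfold colState; grind

theorem colState_eq_unc_iff :
    colState S j i = .unc ↔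
      (i, j) ∉ S ∧ (i - 1, j) ∉ S ∧ (i + 1, j) ∉ S ∧ (i, j + 1) ∉ S := by
  unfold colState; grind

theorem colState_isCycSignature (S : Finset (Fin m × Fin n)) (j : Fin n) :
    IsCycSignature (colState S j) := by
  rw [isCycSignature_iff]
  intro i
  simp only [colState_eq_unc_iff, colState_eq_occ_iff, add_sub_cancel_right]
  tauto

def colSignatures (S : Finset (Fin m × Fin n)) (j : Fin n) : CycSignature m :=
  ⟨colState S j, colState_isCycSignature S j⟩

theorem compatibleCyc_colState (hm : 1 < m) (hn : 1 < n)
    (hS : IsDominating (torusGraph m n) S) (j : Fin n) :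
    CompatibleCyc (colState S j) (colState S (j + 1)) := by
  rw [compatibleCyc_iff]
  intro i
  have hdom := (isDominating_torusGraph_iff hm hn).1 hS i (j + 1)
  simp only [colState_eq_unc_iff, colState_eq_cov_iff, colState_eq_occ_iff,
    add_sub_cancel_right] at hdom ⊢
  tauto

end ColumnStates

section OccupiedSet

variable {m n : ℕ}

def occSet (f : Fin n → CycSignature m) : Finset (Fin m × Fin n) :=
  {p | (f p.2).1 p.1 = .occ}

@[simp]
theorem mem_occSet {f : Fin n → CycSignature m} {p : Fin m × Fin n} :
    p ∈ occSet f ↔ (f p.2).1 p.1 = .occ := by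
  simp [occSet]

theorem card_occSet (f : Fin n → CycSignature m) :
    (occSet f).card = ∑ j, occCount (f j).1 := by
  simp only [occSet, occCount, Finset.card_filter, Fintype.sum_prod_type_right]

variable [NeZero m] [NeZero n]

theorem occSet_colSignatures (S : Finset (Fin m × Fin n)) : occSet (colSignatures S) = S := by
  ext
  simp [colSignatures, colState_eq_occ_iff]

variable {f : Fin n → CycSignature m} (hf : ∀ j, CompatibleCyc (f j).1 (f (j + 1)).1)
include hf

theorem isDominating_occSet (hm : 1 < m) (hn : 1 < n) :
    IsDominating (torusGraph m n) (occSet f) := by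
  rw [isDominating_torusGraph_iff hm hn]
  intro i j
  have hright := (compatibleCyc_iff.1 (hf j) i).2.2
  have hleft := (compatibleCyc_iff.1 (hf (j - 1)) i).1
  rw [sub_add_cancel] at hleft
  simp only [mem_occSet]
  cases h : (f j).1 i <;> grind

theorem colSignatures_occSet : colSignatures (occSet f) = f := by
  funext j
  refine Subtype.ext (funext fun i => ?_)
  change colState (occSet f) j i = (f j).1 i
  have hsig := isCycSignature_iff.1 (f j).2
  have hcomp := compatibleCyc_iff.1 (hf j) i
  have hprev := hsig (i - 1)
  rw [sub_add_cancel] at hprev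
  cases h : (f j).1 i <;>
    grind [colState_eq_unc_iff, colState_eq_cov_iff, colState_eq_occ_iff, mem_occSet]

end OccupiedSet

section TracePow

variable {ι R : Type*} [Fintype ι]

theorem Fin.sum_fun_succ_eq_sum_sum_cons {M : Type*} [AddCommMonoid M] {k : ℕ}
    (F : (Fin (k + 1) → ι) → M) :
    ∑ g, F g = ∑ z, ∑ g : Fin k → ι, F (Fin.cons z g) := by
  rw [← (Fin.consEquiv fun _ => ι).sum_comp, Fintype.sum_prod_type]
  rfl

variable [DecidableEq ι] [CommSemiring R]

theorem Matrix.pow_succ_apply_eq_sum (A : Matrix ι ι R) (k : ℕ) (x y : ι) :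
    (A ^ (k + 1)) x y = ∑ g : Fin k → ι, ∏ j : Fin (k + 1),
      A (Fin.cons (α := fun _ => ι) x g j) (Fin.snoc (α := fun _ => ι) g y j) := by
  induction k generalizing x with
  | zero => simp [Fin.snoc_zero]
  | succ k ih =>
    rw [pow_succ', Matrix.mul_apply, Fin.sum_fun_succ_eq_sum_sum_cons]
    refine Finset.sum_congr rfl fun z _ => ?_
    rw [ih, Finset.mul_sum]
    refine Finset.sum_congr rfl fun g _ => ?_
    rw [Fin.prod_univ_succ (n := k + 1), ← Fin.cons_snoc_eq_snoc_cons]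
    simp

theorem Matrix.trace_pow_eq_sum_prod (A : Matrix ι ι R) (n : ℕ) [NeZero n] :
    Matrix.trace (A ^ n) = ∑ f : Fin n → ι, ∏ j, A (f j) (f (j + 1)) := by
  obtain ⟨k, rfl⟩ := Nat.exists_eq_succ_of_ne_zero (NeZero.ne n)
  have cons_add_one (x : ι) (g : Fin k → ι) (j : Fin (k + 1)) :
      Fin.cons (α := fun _ => ι) x g (j + 1) = Fin.snoc (α := fun _ => ι) g x j := by
    induction j using Fin.lastCases with
    | last => simp
    | cast j => rw [Fin.coeSucc_eq_succ]; simp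
  simp only [Matrix.trace, Matrix.diag_apply, Matrix.pow_succ_apply_eq_sum,
    Fin.sum_fun_succ_eq_sum_sum_cons (k := k), cons_add_one]

end TracePow

section TransferProduct

variable {ι : Type*} [Fintype ι] {m : ℕ} {f g : ι → CycSignature m}

theorem prod_cycTransferMatrix_apply_of_compatible (h : ∀ i, CompatibleCyc (f i).1 (g i).1) :
    ∏ i, cycTransferMatrix m (f i) (g i) = X ^ ∑ i, occCount (f i).1 := by
  simp [cycTransferMatrix, h, Finset.prod_pow_eq_pow_sum]

theorem prod_cycTransferMatrix_apply_eq_zero (h : ¬∀ i, CompatibleCyc (f i).1 (g i).1) :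
    ∏ i, cycTransferMatrix m (f i) (g i) = 0 := by
  obtain ⟨i, hi⟩ := not_forall.1 h
  exact Finset.prod_eq_zero (Finset.mem_univ i) (if_neg hi)

end TransferProduct

/-- The domination polynomial of the m×n torus equals the trace of the n-th power of the
cyclic transfer matrix for width m. -/
theorem torus_domPoly_eq_trace_transferMatrix_pow (m n : ℕ) (hm : 3 ≤ m) (hn : 3 ≤ n) :
    domPoly (torusGraph m n) = Matrix.trace (cycTransferMatrix m ^ n) := by
  have : NeZero m := ⟨by omega⟩
  have : NeZero n := ⟨by omega⟩
  have hm' : 1 < m := by omega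
  have hn' : 1 < n := by omega
  rw [Matrix.trace_pow_eq_sum_prod, domPoly, ← Finset.sum_filter_of_ne
    fun f _ hf => not_imp_comm.1 prod_cycTransferMatrix_apply_eq_zero hf]
  refine Finset.sum_nbij' colSignatures occSet ?_ ?_ ?_ ?_ ?_
  · simp only [Finset.mem_filter, Finset.mem_univ, true_and]
    exact fun S hS => compatibleCyc_colState hm' hn' hS
  · simp only [Finset.mem_filter, Finset.mem_univ, true_and]
    exact fun f hf => isDominating_occSet hf hm' hn'
  · exact fun S _ => occSet_colSignatures S
  · simp only [Finset.mem_filter, Finset.mem_univ, true_and]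
    exact fun f hf => colSignatures_occSet hf
  · intro S hS
    rw [prod_cycTransferMatrix_apply_of_compatible, ← card_occSet, occSet_colSignatures]
    exact compatibleCyc_colState hm' hn' (Finset.mem_filter.1 hS).2
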